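/- arXiv:2012.15477 — 2 statements merged into one kernel-verified Lean document; each statement's English description precedes it below -/
import Mathlib

section
/- Let q*(θ) ∝ exp(−H(θ) − λ‖θ‖²) be a smooth probability density on ℝ^p with λ > 0 and ‖H‖_∞ ≤ c. Then the entropy satisfies −E_{q*}[log q*] ≤ 2c + (p/2)(exp(2c) + log(π/λ)). -/
/-!
Write `U = H + λ‖θ‖²`. Since `log q* = -U - log Z`, the entropy of `q*` is `E_{q*}[U] + log Z`.
The bound `|H| ≤ c` sandwiches the Gibbs weight `exp (-U)` between `exp (∓c)` times the Gaussian
weight `exp (-λ‖θ‖²)`. Hence `log Z ≤ c + (p/2) log (π/λ)`, `E_{q*}[H] ≤ c`, and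
`E_{q*}[λ‖θ‖²]` is at most `exp (2c)` times the Gaussian mean of `λ‖θ‖²`, which is `p/2`
(integrate by parts in each direction of an orthonormal basis).
-/

open MeasureTheory Real

open scoped RealInnerProductSpace

lemma mul_exp_neg_mul_le {b : ℝ} (hb : 0 < b) (t : ℝ) :
    t * exp (-b * t) ≤ 2 / b * exp (-(b / 2) * t) := by
  have hone : b / 2 * t * exp (-(b / 2 * t)) ≤ 1 :=
    (mul_exp_neg_le_exp_neg_one _).trans (exp_le_one_iff.2 (by norm_num))
  calc t * exp (-b * t) = 2 / b * (b / 2 * t * exp (-(b / 2 * t))) * exp (-(b / 2) * t) := by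
        rw [← neg_mul, mul_assoc, mul_assoc, ← exp_add]; field_simp; ring_nf
    _ ≤ 2 / b * 1 * exp (-(b / 2) * t) := by gcongr
    _ = 2 / b * exp (-(b / 2) * t) := by rw [mul_one]

lemma exp_neg_le_exp_of_abs_le {a c : ℝ} (ha : |a| ≤ c) : exp (-a) ≤ exp c :=
  exp_le_exp.2 ((neg_le_abs a).trans ha)

lemma exp_neg_le_exp_neg_of_abs_le {a c : ℝ} (ha : |a| ≤ c) : exp (-c) ≤ exp (-a) :=
  exp_le_exp.2 (neg_le_neg (le_of_abs_le ha))

lemma exp_neg_sub_eq_mul (a b : ℝ) : exp (-a - b) = exp (-a) * exp (-b) := by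
  rw [← exp_add, sub_eq_add_neg]

lemma exp_neg_sub_mul_add_eq (a b : ℝ) :
    exp (-a - b) * (a + b) = a * exp (-a - b) + exp (-a) * (exp (-b) * b) := by
  rw [exp_neg_sub_eq_mul]; ring

section Gaussian

variable {E : Type*} [NormedAddCommGroup E] [InnerProductSpace ℝ E] [FiniteDimensional ℝ E]
  [MeasurableSpace E] [BorelSpace E] {b : ℝ}

lemma integrable_exp_neg_mul_sq_norm (hb : 0 < b) :
    Integrable fun x : E => exp (-b * ‖x‖ ^ 2) := by
  refine Integrable.of_integral_ne_zero ?_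
  rw [GaussianFourier.integral_rexp_neg_mul_sq_norm hb]
  exact (rpow_pos_of_pos (div_pos pi_pos hb) _).ne'

lemma integrable_sq_norm_mul_exp_neg_mul_sq_norm (hb : 0 < b) :
    Integrable fun x : E => ‖x‖ ^ 2 * exp (-b * ‖x‖ ^ 2) := by
  refine ((integrable_exp_neg_mul_sq_norm (half_pos hb)).const_mul (2 / b)).mono'
    (by fun_prop) (.of_forall fun x => ?_)
  rw [norm_of_nonneg (by positivity)]
  exact mul_exp_neg_mul_le hb _

lemma integrable_mul_exp_neg_mul_sq_norm_of_abs_le {F : E → ℝ} (hF : Continuous F) {C : ℝ}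
    (hFC : ∀ x, |F x| ≤ C * (1 + ‖x‖ ^ 2)) (hb : 0 < b) :
    Integrable fun x => F x * exp (-b * ‖x‖ ^ 2) := by
  refine (((integrable_exp_neg_mul_sq_norm hb).add
    (integrable_sq_norm_mul_exp_neg_mul_sq_norm hb)).const_mul C).mono' (by fun_prop)
    (.of_forall fun x => ?_)
  rw [norm_mul, norm_of_nonneg (exp_pos _).le, Real.norm_eq_abs]
  calc |F x| * exp (-b * ‖x‖ ^ 2) ≤ C * (1 + ‖x‖ ^ 2) * exp (-b * ‖x‖ ^ 2) := by
        gcongr; exact hFC x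
    _ = _ := by simp only [Pi.add_apply]; ring

lemma integrable_inner_sq_mul_exp_neg_mul_sq_norm (hb : 0 < b) (w : E) :
    Integrable fun x => ⟪w, x⟫ ^ 2 * exp (-b * ‖x‖ ^ 2) := by
  refine integrable_mul_exp_neg_mul_sq_norm_of_abs_le (C := ‖w‖ ^ 2) (by fun_prop)
    (fun x => ?_) hb
  have hinner := abs_real_inner_le_norm w x
  rw [abs_pow, mul_add, mul_one]
  nlinarith [pow_le_pow_left₀ (abs_nonneg _) hinner 2, sq_nonneg ‖w‖, sq_nonneg ‖x‖]

lemma integral_inner_sq_mul_exp_neg_mul_sq_norm (hb : 0 < b) (w : E) :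
    ∫ x, ⟪w, x⟫ ^ 2 * exp (-b * ‖x‖ ^ 2) = ‖w‖ ^ 2 / (2 * b) * ∫ x : E, exp (-b * ‖x‖ ^ 2) := by
  have hg : ∀ x : E, HasFDerivAt (fun x : E => exp (-b * ‖x‖ ^ 2))
      ((-2 * b * exp (-b * ‖x‖ ^ 2)) • innerSL ℝ x) x := fun x => by
    convert ((hasStrictFDerivAt_norm_sq x).hasFDerivAt.const_mul (-b)).exp using 1
    ext y
    simp only [smul_apply, innerSL_apply_apply, smul_eq_mul, nsmul_eq_mul]
    ring
  -- `∂_w exp (-b‖x‖²) = -2b ⟪x, w⟫ exp (-b‖x‖²)`, integrated by parts against `⟪w, x⟫`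
  have hparts := integral_bilinear_hasFDerivAt_right_eq_neg_left_of_integrable
    (μ := volume) (B := ContinuousLinearMap.mul ℝ ℝ) (v := w)
    (f := innerSL ℝ w) (f' := fun _ => innerSL ℝ w) (hg := fun x _ => hg x)
    ?_ ?_ ?_ (fun x _ => (innerSL ℝ w).hasFDerivAt)
  · simp only [ContinuousLinearMap.mul_apply', smul_apply, innerSL_apply_apply,
      real_inner_self_eq_norm_sq, smul_eq_mul, integral_const_mul] at hparts
    have hrw : ∀ x : E, ⟪w, x⟫ * (-2 * b * exp (-b * ‖x‖ ^ 2) * ⟪x, w⟫)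
        = -2 * b * (⟪w, x⟫ ^ 2 * exp (-b * ‖x‖ ^ 2)) := fun x => by
      rw [real_inner_comm x w]; ring
    simp only [hrw, integral_const_mul] at hparts
    rw [div_mul_eq_mul_div, eq_div_iff (by positivity)]
    linarith
  · simpa using (integrable_exp_neg_mul_sq_norm hb).const_mul (‖w‖ ^ 2)
  · refine ((integrable_inner_sq_mul_exp_neg_mul_sq_norm hb w).const_mul (-2 * b)).congr
      (.of_forall fun x => ?_)
    simp only [ContinuousLinearMap.mul_apply', smul_apply, innerSL_apply_apply, smul_eq_mul,
      real_inner_comm x w]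
    ring
  · refine integrable_mul_exp_neg_mul_sq_norm_of_abs_le (C := ‖w‖) (by fun_prop)
      (fun x => (abs_real_inner_le_norm w x).trans ?_) hb
    gcongr
    nlinarith [sq_nonneg (‖x‖ - 1)]

lemma integral_sq_norm_mul_exp_neg_mul_sq_norm (hb : 0 < b) :
    ∫ x : E, ‖x‖ ^ 2 * exp (-b * ‖x‖ ^ 2)
      = Module.finrank ℝ E / (2 * b) * ∫ x : E, exp (-b * ‖x‖ ^ 2) := by
  let e := stdOrthonormalBasis ℝ E
  have hsum : ∀ x : E, ‖x‖ ^ 2 * exp (-b * ‖x‖ ^ 2) = ∑ i, ⟪e i, x⟫ ^ 2 * exp (-b * ‖x‖ ^ 2) :=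
    fun x => by rw [← Finset.sum_mul, e.sum_sq_inner_right]
  simp_rw [hsum]
  rw [integral_finsetSum _ fun i _ => (integrable_inner_sq_mul_exp_neg_mul_sq_norm hb (e i))]
  simp_rw [integral_inner_sq_mul_exp_neg_mul_sq_norm hb, e.orthonormal.1, one_pow]
  rw [Finset.sum_const, Finset.card_univ, Fintype.card_fin, nsmul_eq_mul]
  ring

end Gaussian

section Gibbs

variable {α : Type*} [MeasurableSpace α] {μ : Measure α}

lemma neg_integral_mul_log_div_eq {U : α → ℝ} {Z : ℝ} (hZ : Z = ∫ x, exp (-U x) ∂μ)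
    (hZ_pos : 0 < Z) (hU : Integrable (fun x => exp (-U x) * U x) μ) :
    -∫ x, exp (-U x) / Z * log (exp (-U x) / Z) ∂μ = (∫ x, exp (-U x) * U x ∂μ) / Z + log Z := by
  have hf : Integrable (fun x => exp (-U x)) μ := .of_integral_ne_zero (hZ ▸ hZ_pos.ne')
  have hpt : ∀ x, exp (-U x) / Z * log (exp (-U x) / Z)
      = -(exp (-U x) * U x / Z + log Z / Z * exp (-U x)) := fun x => by
    rw [log_div (exp_pos _).ne' hZ_pos.ne', log_exp]; ring
  simp_rw [hpt]
  rw [integral_neg, neg_neg, integral_add (hU.div_const Z) (hf.const_mul _), integral_div,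
    integral_const_mul, ← hZ, div_mul_cancel₀ _ hZ_pos.ne']

variable {h V : α → ℝ} {c : ℝ}

lemma MeasureTheory.Integrable.exp_neg_mul_of_abs_le {g : α → ℝ} (hg : Integrable g μ)
    (hh_meas : AEStronglyMeasurable h μ) (hh : ∀ x, |h x| ≤ c) :
    Integrable (fun x => exp (-h x) * g x) μ :=
  hg.bdd_mul (by fun_prop) (.of_forall fun x => by
    rw [norm_of_nonneg (exp_pos _).le]; exact exp_neg_le_exp_of_abs_le (hh x))

lemma integrable_exp_neg_sub (hh_meas : AEStronglyMeasurable h μ) (hh : ∀ x, |h x| ≤ c)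
    (hV_int : Integrable (fun x => exp (-V x)) μ) :
    Integrable (fun x => exp (-h x - V x)) μ := by
  simpa only [exp_neg_sub_eq_mul] using hV_int.exp_neg_mul_of_abs_le hh_meas hh

lemma integral_exp_neg_sub_le (hh_meas : AEStronglyMeasurable h μ) (hh : ∀ x, |h x| ≤ c)
    (hV_int : Integrable (fun x => exp (-V x)) μ) :
    ∫ x, exp (-h x - V x) ∂μ ≤ exp c * ∫ x, exp (-V x) ∂μ := by
  rw [← integral_const_mul]
  refine integral_mono (integrable_exp_neg_sub hh_meas hh hV_int) (hV_int.const_mul _)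
    fun x => ?_
  rw [exp_neg_sub_eq_mul]
  exact mul_le_mul_of_nonneg_right (exp_neg_le_exp_of_abs_le (hh x)) (exp_pos _).le

lemma exp_neg_mul_integral_le (hh_meas : AEStronglyMeasurable h μ) (hh : ∀ x, |h x| ≤ c)
    (hV_int : Integrable (fun x => exp (-V x)) μ) :
    exp (-c) * ∫ x, exp (-V x) ∂μ ≤ ∫ x, exp (-h x - V x) ∂μ := by
  rw [← integral_const_mul]
  refine integral_mono (hV_int.const_mul _) (integrable_exp_neg_sub hh_meas hh hV_int)
    fun x => ?_
  rw [exp_neg_sub_eq_mul]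
  exact mul_le_mul_of_nonneg_right (exp_neg_le_exp_neg_of_abs_le (hh x)) (exp_pos _).le

lemma integrable_exp_neg_sub_mul_add (hh_meas : AEStronglyMeasurable h μ)
    (hh : ∀ x, |h x| ≤ c) (hV_int : Integrable (fun x => exp (-V x)) μ)
    (hVV_int : Integrable (fun x => exp (-V x) * V x) μ) :
    Integrable (fun x => exp (-h x - V x) * (h x + V x)) μ := by
  simp_rw [exp_neg_sub_mul_add_eq]
  refine .add ?_ (hVV_int.exp_neg_mul_of_abs_le hh_meas hh)
  exact (integrable_exp_neg_sub hh_meas hh hV_int).bdd_mul hh_meas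
    (.of_forall fun x => (norm_eq_abs (h x)).trans_le (hh x))

lemma integral_exp_neg_sub_mul_add_le (hh_meas : AEStronglyMeasurable h μ)
    (hh : ∀ x, |h x| ≤ c) (hV : ∀ x, 0 ≤ V x) (hV_int : Integrable (fun x => exp (-V x)) μ)
    (hVV_int : Integrable (fun x => exp (-V x) * V x) μ) :
    ∫ x, exp (-h x - V x) * (h x + V x) ∂μ
      ≤ c * ∫ x, exp (-h x - V x) ∂μ + exp c * ∫ x, exp (-V x) * V x ∂μ := by
  rw [← integral_const_mul, ← integral_const_mul,
    ← integral_add ((integrable_exp_neg_sub hh_meas hh hV_int).const_mul c)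
      (hVV_int.const_mul _)]
  refine integral_mono (integrable_exp_neg_sub_mul_add hh_meas hh hV_int hVV_int)
    (((integrable_exp_neg_sub hh_meas hh hV_int).const_mul c).add (hVV_int.const_mul _))
    fun x => ?_
  rw [exp_neg_sub_mul_add_eq]
  exact add_le_add (mul_le_mul_of_nonneg_right (le_of_abs_le (hh x)) (exp_pos _).le)
    (mul_le_mul_of_nonneg_right (exp_neg_le_exp_of_abs_le (hh x))
      (mul_nonneg (exp_pos _).le (hV x)))

theorem neg_integral_gibbs_mul_log_le [NeZero μ] (hh_meas : AEStronglyMeasurable h μ)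
    (hh : ∀ x, |h x| ≤ c) (hV : ∀ x, 0 ≤ V x) (hV_int : Integrable (fun x => exp (-V x)) μ)
    (hVV_int : Integrable (fun x => exp (-V x) * V x) μ) {Z : ℝ}
    (hZ : Z = ∫ x, exp (-h x - V x) ∂μ) :
    -∫ x, exp (-h x - V x) / Z * log (exp (-h x - V x) / Z) ∂μ
      ≤ 2 * c + exp (2 * c) * ((∫ x, exp (-V x) * V x ∂μ) / ∫ x, exp (-V x) ∂μ)
        + log (∫ x, exp (-V x) ∂μ) := by
  set Z₀ := ∫ x, exp (-V x) ∂μ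
  set M := ∫ x, exp (-V x) * V x ∂μ
  have hZ₀ : 0 < Z₀ := integral_exp_pos hV_int
  have hM : 0 ≤ M := integral_nonneg fun x => mul_nonneg (exp_pos _).le (hV x)
  have hZ_le : Z ≤ exp c * Z₀ := hZ ▸ integral_exp_neg_sub_le hh_meas hh hV_int
  have hZ_ge : exp (-c) * Z₀ ≤ Z := hZ ▸ exp_neg_mul_integral_le hh_meas hh hV_int
  have hZ_pos : 0 < Z := (by positivity : 0 < exp (-c) * Z₀).trans_le hZ_ge
  have henergy : ∫ x, exp (-h x - V x) * (h x + V x) ∂μ ≤ c * Z + exp c * M :=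
    hZ ▸ integral_exp_neg_sub_mul_add_le hh_meas hh hV hV_int hVV_int
  have hentropy := neg_integral_mul_log_div_eq (U := fun x => h x + V x)
    (by simpa only [neg_add'] using hZ) hZ_pos
    (by simpa only [neg_add'] using integrable_exp_neg_sub_mul_add hh_meas hh hV_int hVV_int)
  simp only [neg_add'] at hentropy
  rw [hentropy]
  calc (∫ x, exp (-h x - V x) * (h x + V x) ∂μ) / Z + log Z
      ≤ (c * Z + exp c * M) / Z + log (exp c * Z₀) := by
        gcongr
    _ = c + exp c * M / Z + (c + log Z₀) := by
        rw [log_mul (exp_pos _).ne' hZ₀.ne', log_exp]; field_simp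
    _ ≤ c + exp c * M / (exp (-c) * Z₀) + (c + log Z₀) := by gcongr
    _ = 2 * c + exp (2 * c) * (M / Z₀) + log Z₀ := by
        rw [mul_div_mul_comm, ← exp_sub]; ring_nf

end Gibbs

theorem gibbs_entropy_upper_bound_general
    (p : ℕ) (H : EuclideanSpace ℝ (Fin p) → ℝ) (lam c : ℝ)
    (hlam : 0 < lam) (hH_cont : Continuous H) (hH_bdd : ∀ θ, |H θ| ≤ c)
    (Z : ℝ) (hZ : Z = ∫ θ : EuclideanSpace ℝ (Fin p),
        Real.exp (-(H θ) - lam * ‖θ‖ ^ 2))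
    (qs : EuclideanSpace ℝ (Fin p) → ℝ)
    (hqs : ∀ θ, qs θ = Real.exp (-(H θ) - lam * ‖θ‖ ^ 2) / Z) :
    -(∫ θ, qs θ * Real.log (qs θ))
      ≤ 2 * c + ((p : ℝ) / 2) * (Real.exp (2 * c) + Real.log (π / lam)) := by
  have hgauss := GaussianFourier.integral_rexp_neg_mul_sq_norm hlam
    (V := EuclideanSpace ℝ (Fin p))
  have hmoment := integral_sq_norm_mul_exp_neg_mul_sq_norm hlam (E := EuclideanSpace ℝ (Fin p))
  simp only [neg_mul, finrank_euclideanSpace_fin] at hgauss hmoment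
  have henergy : ∫ θ : EuclideanSpace ℝ (Fin p), exp (-(lam * ‖θ‖ ^ 2)) * (lam * ‖θ‖ ^ 2)
      = p / 2 * ∫ θ : EuclideanSpace ℝ (Fin p), exp (-(lam * ‖θ‖ ^ 2)) := by
    simp_rw [mul_comm (exp _), mul_assoc, integral_const_mul, hmoment]
    field_simp
  simp_rw [hqs]
  refine (neg_integral_gibbs_mul_log_le (V := fun θ => lam * ‖θ‖ ^ 2)
    hH_cont.aestronglyMeasurable hH_bdd (fun θ => by positivity) ?_ ?_ hZ).trans_eq ?_
  · simpa only [neg_mul] using integrable_exp_neg_mul_sq_norm hlam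
  · simpa only [neg_mul, mul_comm (exp _), mul_assoc] using
      (integrable_sq_norm_mul_exp_neg_mul_sq_norm hlam).const_mul lam
  · rw [henergy, mul_div_assoc, div_self, hgauss, log_rpow (div_pos pi_pos hlam)]
    · ring
    · rw [hgauss]; positivity

/-- Maximum entropy bound for a Gibbs density `q* ∝ exp(-H - λ‖θ‖²)` with
`‖H‖_∞ ≤ c`: `-E_{q*}[log q*] ≤ 2c + (p/2)(exp(2c) + log(π/λ))`. -/
theorem gibbs_entropy_upper_bound
    (p : ℕ) (H : EuclideanSpace ℝ (Fin p) → ℝ) (lam c : ℝ)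
    (hlam : 0 < lam) (hH_cont : Continuous H) (hH_bdd : ∀ θ, |H θ| ≤ c)
    (Z : ℝ) (hZ : Z = ∫ θ : EuclideanSpace ℝ (Fin p),
        Real.exp (-(H θ) - lam * ‖θ‖ ^ 2))
    (qs : EuclideanSpace ℝ (Fin p) → ℝ)
    (hqs : ∀ θ, qs θ = Real.exp (-(H θ) - lam * ‖θ‖ ^ 2) / Z)
    (hent : Integrable (fun θ => qs θ * Real.log (qs θ))) :
    -(∫ θ, qs θ * Real.log (qs θ))
      ≤ 2 * c + ((p : ℝ) / 2) * (Real.exp (2 * c) + Real.log (π / lam)) :=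
  gibbs_entropy_upper_bound_general p H lam c hlam hH_cont hH_bdd Z hZ qs hqs
end

section
/- Let q*(θ) ∝ exp(−H*(θ) − λ*‖θ‖²) and q♯(θ) ∝ exp(−H♯(θ) − λ♯‖θ‖²) be smooth densities on ℝ^p with λ*, λ♯ > 0, ‖H*‖_∞ ≤ c*, ‖H♯‖_∞ ≤ c♯. Then for any smooth density q: KL(q‖q*) ≤ 4c* + 2c♯ + (3/2)(1 + λ*/λ♯)p·exp(2c♯) + (p/2)log(λ♯/λ*) + (1 + 4(1 + λ*/λ♯)exp(4c♯))·KL(q‖q♯) + c♯·√(2 KL(q‖q♯)). -/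
open MeasureTheory Real

lemma gauss_integrable (p : ℕ) {b : ℝ} (hb : 0 < b) :
    Integrable (fun θ : EuclideanSpace ℝ (Fin p) => Real.exp (-b * ‖θ‖ ^ 2)) := by
  have h := (GaussianFourier.integrable_cexp_neg_mul_sq_norm_add
    (V := EuclideanSpace ℝ (Fin p)) (b := (b : ℂ)) (by simpa using hb) 0 0).norm
  refine h.congr (Filter.Eventually.of_forall fun θ => ?_)
  simp [Complex.norm_exp]
  norm_cast
  exact Or.inl rfl

lemma gauss_integral (p : ℕ) {b : ℝ} (hb : 0 < b) :
    ∫ θ : EuclideanSpace ℝ (Fin p), Real.exp (-b * ‖θ‖ ^ 2) = (π / b) ^ ((p : ℝ) / 2) := by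
  rw [GaussianFourier.integral_rexp_neg_mul_sq_norm hb]
  norm_num [finrank_euclideanSpace_fin]

lemma gibbs_integrable (p : ℕ) (H : EuclideanSpace ℝ (Fin p) → ℝ) (c lam : ℝ)
    (hlam : 0 < lam) (hH_cont : Continuous H) (hH_bdd : ∀ θ, |H θ| ≤ c) :
    Integrable (fun θ : EuclideanSpace ℝ (Fin p) =>
      Real.exp (-(H θ) - lam * ‖θ‖ ^ 2)) := by
  refine Integrable.mono' ((gauss_integrable p hlam).const_mul (Real.exp c))
    ?_ (Filter.Eventually.of_forall fun θ => ?_)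
  · exact (Real.continuous_exp.comp (by fun_prop)).aestronglyMeasurable
  · rw [Real.norm_of_nonneg (Real.exp_nonneg _), ← Real.exp_add]
    apply Real.exp_le_exp.2
    have := abs_le.1 (hH_bdd θ); linarith

lemma gibbs_Z_bounds (p : ℕ) (H : EuclideanSpace ℝ (Fin p) → ℝ) (c lam : ℝ)
    (hlam : 0 < lam) (hH_cont : Continuous H) (hH_bdd : ∀ θ, |H θ| ≤ c) :
    Real.exp (-c) * (π / lam) ^ ((p : ℝ) / 2)
      ≤ (∫ θ : EuclideanSpace ℝ (Fin p), Real.exp (-(H θ) - lam * ‖θ‖ ^ 2)) ∧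
    (∫ θ : EuclideanSpace ℝ (Fin p), Real.exp (-(H θ) - lam * ‖θ‖ ^ 2))
      ≤ Real.exp c * (π / lam) ^ ((p : ℝ) / 2) := by
  have hgi := gauss_integrable p hlam
  have hi := gibbs_integrable p H c lam hlam hH_cont hH_bdd
  constructor
  · rw [← gauss_integral p hlam, ← MeasureTheory.integral_const_mul]
    refine integral_mono (hgi.const_mul _) hi fun θ => ?_
    rw [← Real.exp_add]
    apply Real.exp_le_exp.2
    have := abs_le.1 (hH_bdd θ); linarith
  · rw [← gauss_integral p hlam, ← MeasureTheory.integral_const_mul]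
    refine integral_mono hi (hgi.const_mul _) fun θ => ?_
    rw [← Real.exp_add]
    apply Real.exp_le_exp.2
    have := abs_le.1 (hH_bdd θ); linarith

lemma gibbs_log_Z_bounds (p : ℕ) (H : EuclideanSpace ℝ (Fin p) → ℝ) (c lam Z : ℝ)
    (hlam : 0 < lam) (hH_cont : Continuous H) (hH_bdd : ∀ θ, |H θ| ≤ c)
    (hZ : Z = ∫ θ : EuclideanSpace ℝ (Fin p), Real.exp (-(H θ) - lam * ‖θ‖ ^ 2)) :
    (0 < Z) ∧
    (-c + ((p : ℝ) / 2) * Real.log (π / lam) ≤ Real.log Z) ∧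
    (Real.log Z ≤ c + ((p : ℝ) / 2) * Real.log (π / lam)) := by
  obtain ⟨h1, h2⟩ := gibbs_Z_bounds p H c lam hlam hH_cont hH_bdd
  rw [← hZ] at h1 h2
  have hpil : 0 < π / lam := div_pos Real.pi_pos hlam
  have hZpos : 0 < Z := lt_of_lt_of_le (by positivity) h1
  refine ⟨hZpos, ?_, ?_⟩
  · calc -c + ((p : ℝ) / 2) * Real.log (π / lam)
        = Real.log (Real.exp (-c) * (π / lam) ^ ((p : ℝ) / 2)) := by
          rw [Real.log_mul (Real.exp_ne_zero _) (by positivity), Real.log_exp,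
            Real.log_rpow hpil]
      _ ≤ Real.log Z := Real.log_le_log (by positivity) h1
  · calc Real.log Z ≤ Real.log (Real.exp c * (π / lam) ^ ((p : ℝ) / 2)) :=
          Real.log_le_log hZpos h2
      _ = c + ((p : ℝ) / 2) * Real.log (π / lam) := by
          rw [Real.log_mul (Real.exp_ne_zero _) (by positivity), Real.log_exp,
            Real.log_rpow hpil]

lemma gibbs_decomp (p : ℕ) (H : EuclideanSpace ℝ (Fin p) → ℝ) (c lam Z : ℝ)
    (hlam : 0 < lam) (hH_cont : Continuous H) (hH_bdd : ∀ θ, |H θ| ≤ c)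
    (hZ : Z = ∫ θ : EuclideanSpace ℝ (Fin p), Real.exp (-(H θ) - lam * ‖θ‖ ^ 2))
    (Q : EuclideanSpace ℝ (Fin p) → ℝ)
    (hQ : ∀ θ, Q θ = Real.exp (-(H θ) - lam * ‖θ‖ ^ 2) / Z)
    (q : EuclideanSpace ℝ (Fin p) → ℝ)
    (hq_pos : ∀ θ, 0 < q θ)
    (hq_int : Integrable q) (hq_one : ∫ θ, q θ = 1)
    (hq_mom : Integrable (fun θ => q θ * ‖θ‖ ^ 2))
    (hq_ent : Integrable (fun θ => q θ * Real.log (q θ))) :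
    Integrable (fun θ => q θ * Real.log (q θ / Q θ)) ∧
    (∫ θ, q θ * Real.log (q θ / Q θ)) =
      (∫ θ, q θ * Real.log (q θ)) + (∫ θ, q θ * H θ)
        + lam * (∫ θ, q θ * ‖θ‖ ^ 2) + Real.log Z ∧
    0 ≤ ∫ θ, q θ * Real.log (q θ / Q θ) := by
  obtain ⟨hZpos, -, -⟩ := gibbs_log_Z_bounds p H c lam Z hlam hH_cont hH_bdd hZ
  have hgi := gibbs_integrable p H c lam hlam hH_cont hH_bdd
  have hQpos : ∀ θ, 0 < Q θ := fun θ => by rw [hQ]; positivity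
  have key : ∀ θ, q θ * Real.log (q θ / Q θ)
      = q θ * Real.log (q θ) + q θ * H θ + lam * (q θ * ‖θ‖ ^ 2)
        + q θ * Real.log Z := by
    intro θ
    rw [Real.log_div (hq_pos θ).ne' (hQpos θ).ne', hQ,
      Real.log_div (Real.exp_ne_zero _) hZpos.ne', Real.log_exp]
    ring
  have i2 : Integrable (fun θ => q θ * H θ) := by
    have := hq_int.bdd_mul hH_cont.aestronglyMeasurable
      (Filter.Eventually.of_forall fun θ => by simpa using hH_bdd θ)
    exact this.congr (Filter.Eventually.of_forall fun θ => mul_comm _ _)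
  have i3 : Integrable (fun θ => lam * (q θ * ‖θ‖ ^ 2)) := hq_mom.const_mul lam
  have i4 : Integrable (fun θ => q θ * Real.log Z) := hq_int.mul_const _
  have itot : Integrable (fun θ => q θ * Real.log (q θ / Q θ)) := by
    refine (((hq_ent.add i2).add i3).add i4).congr
      (Filter.Eventually.of_forall fun θ => (key θ).symm)
  have hval : (∫ θ, q θ * Real.log (q θ / Q θ)) =
      (∫ θ, q θ * Real.log (q θ)) + (∫ θ, q θ * H θ)
        + lam * (∫ θ, q θ * ‖θ‖ ^ 2) + Real.log Z := by
    calc (∫ θ, q θ * Real.log (q θ / Q θ))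
        = ∫ θ, (q θ * Real.log (q θ) + q θ * H θ + lam * (q θ * ‖θ‖ ^ 2)
            + q θ * Real.log Z) := by
          exact integral_congr_ae (Filter.Eventually.of_forall key)
      _ = (∫ θ, q θ * Real.log (q θ)) + (∫ θ, q θ * H θ)
            + lam * (∫ θ, q θ * ‖θ‖ ^ 2) + Real.log Z := by
          have i12 : Integrable (fun θ => q θ * Real.log (q θ) + q θ * H θ) :=
            hq_ent.add i2
          have i123 : Integrable (fun θ => q θ * Real.log (q θ) + q θ * H θ
              + lam * (q θ * ‖θ‖ ^ 2)) := i12.add i3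
          rw [integral_add i123 i4, integral_add i12 i3, integral_add hq_ent i2,
            MeasureTheory.integral_const_mul, MeasureTheory.integral_mul_const,
            hq_one, one_mul]
  have hQint : Integrable Q := by
    refine (hgi.div_const Z).congr (Filter.Eventually.of_forall fun θ => (hQ θ).symm)
  have hQone : ∫ θ, Q θ = 1 := by
    simp_rw [hQ]
    rw [integral_div, ← hZ, div_self hZpos.ne']
  have hpt : ∀ θ, q θ - Q θ ≤ q θ * Real.log (q θ / Q θ) := by
    intro θ
    have h := Real.log_le_sub_one_of_pos (div_pos (hQpos θ) (hq_pos θ))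
    rw [Real.log_div (hQpos θ).ne' (hq_pos θ).ne'] at h
    rw [Real.log_div (hq_pos θ).ne' (hQpos θ).ne']
    have hq := hq_pos θ
    have h2 : Q θ / q θ * q θ = Q θ := div_mul_cancel₀ _ hq.ne'
    nlinarith [hq_pos θ, hQpos θ]
  have hnn : 0 ≤ ∫ θ, q θ * Real.log (q θ / Q θ) := by
    have hsub : Integrable (fun θ => q θ - Q θ) := hq_int.sub hQint
    have := integral_mono hsub itot hpt
    rwa [integral_sub hq_int hQint, hq_one, hQone, sub_self] at this
  exact ⟨itot, hval, hnn⟩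

lemma int_q_mul_abs_le (p : ℕ) (H : EuclideanSpace ℝ (Fin p) → ℝ) (c : ℝ)
    (hH_cont : Continuous H) (hH_bdd : ∀ θ, |H θ| ≤ c)
    (q : EuclideanSpace ℝ (Fin p) → ℝ)
    (hq_pos : ∀ θ, 0 < q θ)
    (hq_int : Integrable q) (hq_one : ∫ θ, q θ = 1) :
    |∫ θ, q θ * H θ| ≤ c := by
  have i2 : Integrable (fun θ => q θ * H θ) := by
    have := hq_int.bdd_mul hH_cont.aestronglyMeasurable
      (Filter.Eventually.of_forall fun θ => by simpa using hH_bdd θ)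
    exact this.congr (Filter.Eventually.of_forall fun θ => mul_comm _ _)
  calc |∫ θ, q θ * H θ| ≤ ∫ θ, |q θ| * |H θ| := by
        have := MeasureTheory.norm_integral_le_integral_norm
          (μ := volume) (fun θ => q θ * H θ)
        simpa [Real.norm_eq_abs] using this
    _ ≤ ∫ θ, q θ * c := by
        have i2' : Integrable (fun θ => |q θ| * |H θ|) := by
          refine i2.abs.congr (Filter.Eventually.of_forall fun θ => ?_)
          simp [abs_mul]
        refine integral_mono i2' (hq_int.mul_const c) fun θ => ?_
        rw [abs_of_pos (hq_pos θ)]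
        exact mul_le_mul_of_nonneg_left (hH_bdd θ) (hq_pos θ).le
    _ = c := by rw [MeasureTheory.integral_mul_const, hq_one, one_mul]

lemma key_numeric_ineq {c : ℝ} (hc : 0 ≤ c) :
    4 * c + Real.log 2 ≤ (3 / 2) * Real.exp (2 * c) := by
  have h1 : c + 1 ≤ Real.exp c := Real.add_one_le_exp c
  have h2 : Real.exp (2 * c) = Real.exp c * Real.exp c := by
    rw [← Real.exp_add]; ring_nf
  have hl : Real.log 2 < 0.6931471808 := Real.log_two_lt_d9
  nlinarith [Real.exp_pos c, sq_nonneg (c - 1 / 3)]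

set_option maxHeartbeats 2000000 in
/-- Boundedness of KL divergence between Gibbs targets: with
`q* ∝ exp(-H* - λ*‖θ‖²)`, `q♯ ∝ exp(-H♯ - λ♯‖θ‖²)`, `‖H*‖_∞ ≤ c*`,
`‖H♯‖_∞ ≤ c♯`, for any smooth density `q`,
`KL(q‖q*) ≤ 4c* + 2c♯ + (3/2)(1+λ*/λ♯) p e^{2c♯} + (p/2)log(λ♯/λ*)
  + (1 + 4(1+λ*/λ♯)e^{4c♯}) KL(q‖q♯) + c♯ √(2 KL(q‖q♯))`. -/
theorem kl_boundedness_between_gibbs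
    (p : ℕ) (Hs Hsh : EuclideanSpace ℝ (Fin p) → ℝ) (lams lamsh cs csh : ℝ)
    (hlams : 0 < lams) (hlamsh : 0 < lamsh)
    (hHs_cont : Continuous Hs) (hHsh_cont : Continuous Hsh)
    (hHs_bdd : ∀ θ, |Hs θ| ≤ cs) (hHsh_bdd : ∀ θ, |Hsh θ| ≤ csh)
    (Zs Zsh : ℝ)
    (hZs : Zs = ∫ θ : EuclideanSpace ℝ (Fin p),
        Real.exp (-(Hs θ) - lams * ‖θ‖ ^ 2))
    (hZsh : Zsh = ∫ θ : EuclideanSpace ℝ (Fin p),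
        Real.exp (-(Hsh θ) - lamsh * ‖θ‖ ^ 2))
    (qs qsh : EuclideanSpace ℝ (Fin p) → ℝ)
    (hqs : ∀ θ, qs θ = Real.exp (-(Hs θ) - lams * ‖θ‖ ^ 2) / Zs)
    (hqsh : ∀ θ, qsh θ = Real.exp (-(Hsh θ) - lamsh * ‖θ‖ ^ 2) / Zsh)
    (q : EuclideanSpace ℝ (Fin p) → ℝ)
    (hq_pos : ∀ θ, 0 < q θ) (hq_smooth : ContDiff ℝ (⊤ : ℕ∞) q)
    (hq_int : Integrable q) (hq_one : ∫ θ, q θ = 1)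
    (hq_mom : Integrable (fun θ => q θ * ‖θ‖ ^ 2))
    (hq_ent : Integrable (fun θ => q θ * Real.log (q θ)))
    (hkls_int : Integrable (fun θ => q θ * Real.log (q θ / qs θ)))
    (hklsh_int : Integrable (fun θ => q θ * Real.log (q θ / qsh θ))) :
    (∫ θ, q θ * Real.log (q θ / qs θ))
      ≤ 4 * cs + 2 * csh
        + (3 / 2) * (1 + lams / lamsh) * (p : ℝ) * Real.exp (2 * csh)
        + ((p : ℝ) / 2) * Real.log (lamsh / lams)
        + (1 + 4 * (1 + lams / lamsh) * Real.exp (4 * csh)) *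
            (∫ θ, q θ * Real.log (q θ / qsh θ))
        + csh * Real.sqrt (2 * ∫ θ, q θ * Real.log (q θ / qsh θ)) := by
  have hcs : 0 ≤ cs := le_trans (abs_nonneg _) (hHs_bdd 0)
  have hcsh : 0 ≤ csh := le_trans (abs_nonneg _) (hHsh_bdd 0)
  obtain ⟨-, d1val, -⟩ := gibbs_decomp p Hs cs lams Zs hlams hHs_cont hHs_bdd hZs
    qs hqs q hq_pos hq_int hq_one hq_mom hq_ent
  obtain ⟨-, d2val, d2nn⟩ := gibbs_decomp p Hsh csh lamsh Zsh hlamsh hHsh_cont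
    hHsh_bdd hZsh qsh hqsh q hq_pos hq_int hq_one hq_mom hq_ent
  -- Gaussian comparison for the entropy bound
  obtain ⟨-, dgval, dgnn⟩ := gibbs_decomp p (fun _ => 0) 0 (lamsh / 2)
    (∫ θ : EuclideanSpace ℝ (Fin p), Real.exp (-(0 : ℝ) - lamsh / 2 * ‖θ‖ ^ 2))
    (by positivity) continuous_const (fun θ => by simp) rfl
    (fun θ => Real.exp (-(0 : ℝ) - lamsh / 2 * ‖θ‖ ^ 2)
      / ∫ θ : EuclideanSpace ℝ (Fin p), Real.exp (-(0 : ℝ) - lamsh / 2 * ‖θ‖ ^ 2))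
    (fun θ => rfl) q hq_pos hq_int hq_one hq_mom hq_ent
  obtain ⟨-, -, hZg_ub⟩ := gibbs_log_Z_bounds p (fun _ => 0) 0 (lamsh / 2)
    (∫ θ : EuclideanSpace ℝ (Fin p), Real.exp (-(0 : ℝ) - lamsh / 2 * ‖θ‖ ^ 2))
    (by positivity) continuous_const (fun θ => by simp) rfl
  obtain ⟨-, hZs_lb, hZs_ub⟩ := gibbs_log_Z_bounds p Hs cs lams Zs hlams
    hHs_cont hHs_bdd hZs
  obtain ⟨-, hZsh_lb, hZsh_ub⟩ := gibbs_log_Z_bounds p Hsh csh lamsh Zsh hlamsh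
    hHsh_cont hHsh_bdd hZsh
  have hIs := abs_le.1 (int_q_mul_abs_le p Hs cs hHs_cont hHs_bdd q hq_pos hq_int hq_one)
  have hIsh := abs_le.1 (int_q_mul_abs_le p Hsh csh hHsh_cont hHsh_bdd q hq_pos hq_int hq_one)
  have hm : 0 ≤ ∫ θ, q θ * ‖θ‖ ^ 2 :=
    integral_nonneg fun θ => mul_nonneg (hq_pos θ).le (by positivity)
  have hzero : (∫ θ, q θ * (0 : ℝ)) = 0 := by simp
  rw [hzero] at dgval
  -- log identities
  have hll1 : Real.log (π / lams) - Real.log (π / lamsh) = Real.log (lamsh / lams) := by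
    rw [Real.log_div Real.pi_ne_zero hlams.ne', Real.log_div Real.pi_ne_zero hlamsh.ne',
      Real.log_div hlamsh.ne' hlams.ne']
    ring
  have hll2 : Real.log (π / (lamsh / 2)) - Real.log (π / lamsh) = Real.log 2 := by
    rw [Real.log_div Real.pi_ne_zero (by positivity : (lamsh / 2 : ℝ) ≠ 0),
      Real.log_div Real.pi_ne_zero hlamsh.ne',
      Real.log_div hlamsh.ne' (two_ne_zero)]
    ring
  have hll1' : ((p : ℝ) / 2) * Real.log (π / lams)
      - ((p : ℝ) / 2) * Real.log (π / lamsh)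
      = ((p : ℝ) / 2) * Real.log (lamsh / lams) := by
    linear_combination ((p : ℝ) / 2) * hll1
  have hll2' : ((p : ℝ) / 2) * Real.log (π / (lamsh / 2))
      - ((p : ℝ) / 2) * Real.log (π / lamsh)
      = ((p : ℝ) / 2) * Real.log 2 := by
    linear_combination ((p : ℝ) / 2) * hll2
  rw [dgval] at dgnn
  -- entropy/moment bound : (lamsh/2) m ≤ KLsh + 2 csh + (p/2) log 2
  have hhalf : lamsh / 2 * (∫ θ, q θ * ‖θ‖ ^ 2)
      ≤ (∫ θ, q θ * Real.log (q θ / qsh θ)) + 2 * csh + ((p : ℝ) / 2) * Real.log 2 := by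
    linarith [d2val, dgnn, hZg_ub, hZsh_lb, hIsh.1, hll2']
  -- main decomposition inequality
  have hmain : (∫ θ, q θ * Real.log (q θ / qs θ))
      ≤ (∫ θ, q θ * Real.log (q θ / qsh θ)) + 2 * cs + 2 * csh
        + lams * (∫ θ, q θ * ‖θ‖ ^ 2) + ((p : ℝ) / 2) * Real.log (lamsh / lams) := by
    have hlm : 0 ≤ lamsh * (∫ θ, q θ * ‖θ‖ ^ 2) := mul_nonneg hlamsh.le hm
    linarith [d1val, d2val, hIs.2, hIsh.1, hZs_ub, hZsh_lb, hll1']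
  have hsq : 0 ≤ csh * Real.sqrt (2 * ∫ θ, q θ * Real.log (q θ / qsh θ)) :=
    mul_nonneg hcsh (Real.sqrt_nonneg _)
  rcases Nat.eq_zero_or_pos p with h0 | hp
  · -- p = 0 : the second moment vanishes
    subst h0
    have hm0 : (∫ θ : EuclideanSpace ℝ (Fin 0), q θ * ‖θ‖ ^ 2) = 0 := by
      have hn : ∀ θ : EuclideanSpace ℝ (Fin 0), q θ * ‖θ‖ ^ 2 = 0 := by
        intro θ
        have h0 : ‖θ‖ = 0 := by simp [EuclideanSpace.norm_eq]
        rw [h0]; ring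
      simp only [hn, integral_zero]
    rw [hm0] at hmain
    have hX : 0 ≤ 4 * (1 + lams / lamsh) * Real.exp (4 * csh)
        * (∫ θ, q θ * Real.log (q θ / qsh θ)) :=
      mul_nonneg (by positivity) d2nn
    push_cast
    linarith [hmain, hX, hsq, hcs]
  · have hp1 : (1 : ℝ) ≤ (p : ℝ) := by exact_mod_cast hp
    have hr : 0 ≤ lams / lamsh := by positivity
    have hp0 : (0 : ℝ) ≤ (p : ℝ) := by positivity
    -- moment bound multiplied through
    have hM : lams * (∫ θ, q θ * ‖θ‖ ^ 2)
        ≤ 2 * (lams / lamsh) * (∫ θ, q θ * Real.log (q θ / qsh θ))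
          + 4 * (lams / lamsh) * csh
          + (lams / lamsh) * (p : ℝ) * Real.log 2 := by
      have h2r : (0 : ℝ) < 2 * (lams / lamsh) := by positivity
      have := mul_le_mul_of_nonneg_left hhalf h2r.le
      have hle : 2 * (lams / lamsh) * (lamsh / 2 * (∫ θ, q θ * ‖θ‖ ^ 2))
          = lams * (∫ θ, q θ * ‖θ‖ ^ 2) := by
        field_simp
      calc lams * (∫ θ, q θ * ‖θ‖ ^ 2)
          = 2 * (lams / lamsh) * (lamsh / 2 * (∫ θ, q θ * ‖θ‖ ^ 2)) := hle.symm
        _ ≤ 2 * (lams / lamsh) * ((∫ θ, q θ * Real.log (q θ / qsh θ)) + 2 * csh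
              + ((p : ℝ) / 2) * Real.log 2) := this
        _ = 2 * (lams / lamsh) * (∫ θ, q θ * Real.log (q θ / qsh θ))
              + 4 * (lams / lamsh) * csh
              + (lams / lamsh) * (p : ℝ) * Real.log 2 := by ring
    have t1 : 2 * (lams / lamsh) * (∫ θ, q θ * Real.log (q θ / qsh θ))
        ≤ 4 * (1 + lams / lamsh) * Real.exp (4 * csh)
          * (∫ θ, q θ * Real.log (q θ / qsh θ)) := by
      have he : (1 : ℝ) ≤ Real.exp (4 * csh) := Real.one_le_exp (by positivity)
      have hco : 2 * (lams / lamsh) ≤ 4 * (1 + lams / lamsh) * Real.exp (4 * csh) := by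
        have h4 : 4 * (1 + lams / lamsh) ≤ 4 * (1 + lams / lamsh) * Real.exp (4 * csh) :=
          le_mul_of_one_le_right (by positivity) he
        linarith
      exact mul_le_mul_of_nonneg_right hco d2nn
    have t2 : 4 * (lams / lamsh) * csh + (lams / lamsh) * (p : ℝ) * Real.log 2
        ≤ (3 / 2) * (1 + lams / lamsh) * (p : ℝ) * Real.exp (2 * csh) := by
      have key := key_numeric_ineq hcsh
      have h1 : 4 * (lams / lamsh) * csh + (lams / lamsh) * (p : ℝ) * Real.log 2
          ≤ (lams / lamsh) * (p : ℝ) * (4 * csh + Real.log 2) := by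
        nlinarith [mul_nonneg hr hcsh]
      have h2 : (lams / lamsh) * (p : ℝ) * (4 * csh + Real.log 2)
          ≤ (lams / lamsh) * (p : ℝ) * ((3 / 2) * Real.exp (2 * csh)) :=
        mul_le_mul_of_nonneg_left key (by positivity)
      have h3 : (lams / lamsh) * (p : ℝ) * ((3 / 2) * Real.exp (2 * csh))
          ≤ (3 / 2) * (1 + lams / lamsh) * (p : ℝ) * Real.exp (2 * csh) := by
        nlinarith [mul_nonneg hp0 (Real.exp_pos (2 * csh)).le]
      linarith
    linarith [hmain, hM, t1, t2, hsq, hcs]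
end
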